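/- Let A = W Λ Wᵀ be an eigendecomposition of an n×n real symmetric positive semidefinite matrix A, where W is orthogonal and Λ = diag(λ_1, …, λ_n) with λ_1 ≥ λ_2 ≥ … ≥ λ_n ≥ 0. Fix integers k ≥ 1 and j ≥ 1 with jk ≤ n, and for i = 1, …, j let W_i ∈ ℝ^{n×k} consist of columns (i−1)k+1 through ik of W. Then for every X ∈ ℝ^{n×k}, σ_min(XᵀA^{1/2}) ≥ ( Σ_{i=1}^{j} λ_{ik} · σ_min(W_iᵀX)² )^{1/2}. -/

import Mathlib

/-
For a unit vector `u` put `w = Wᵀ X u`. Then `‖A^{1/2} X u‖² = (X u)ᵀ A (X u) = Σ_c λ_c w_c²`,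
and the coordinates of `w` in the `i`-th block `{ik, …, ik + k - 1}` are the entries of `W_iᵀ X u`,
whose squared norm is at least `σ_min(W_iᵀ X)²`. As `λ` is antitone, `λ_c ≥ λ_{ik+k-1}` on
block `i`; dropping the coordinates beyond `jk` gives
`Σ_i λ_{ik+k-1} σ_min(W_iᵀ X)² ≤ ‖A^{1/2} X u‖²` for every unit vector `u`, and
`σ_min(Xᵀ A^{1/2})` is the infimum of the right-hand side over `u`.
-/

open Matrix

/-- The smallest singular value of a square real matrix: `σ_min(M) = min_{‖x‖=1} ‖Mx‖`. -/
noncomputable def sigmaMin {n : ℕ} (M : Matrix (Fin n) (Fin n) ℝ) : ℝ :=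
  ⨅ x : Metric.sphere (0 : EuclideanSpace ℝ (Fin n)) 1,
    ‖Matrix.toEuclideanLin M (x : EuclideanSpace ℝ (Fin n))‖

/-- For a `k × n` matrix `M` with `k ≤ n`, the smallest of the `k` singular values
of `M`: `σ_min(M) = min_{‖u‖=1} ‖Mᵀ u‖`. -/
noncomputable def sigmaLast {k n : ℕ} (M : Matrix (Fin k) (Fin n) ℝ) : ℝ :=
  ⨅ u : Metric.sphere (0 : EuclideanSpace ℝ (Fin k)) 1,
    ‖Matrix.toEuclideanLin Mᵀ (u : EuclideanSpace ℝ (Fin k))‖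

/-- The positive semidefinite square root of a positive semidefinite matrix, as
`Matrix.PosSemidef.sqrt` was defined in the older Mathlib. -/
noncomputable def Matrix.PosSemidef.sqrt {n : ℕ} {A : Matrix (Fin n) (Fin n) ℝ}
    (hA : A.PosSemidef) : Matrix (Fin n) (Fin n) ℝ :=
  (hA.1.eigenvectorUnitary : Matrix (Fin n) (Fin n) ℝ) *
    diagonal ((↑) ∘ (√·) ∘ hA.1.eigenvalues) *
    (star (hA.1.eigenvectorUnitary : Matrix (Fin n) (Fin n) ℝ))

namespace Matrix

variable {m n : Type*} [Fintype m] [Fintype n]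

lemma norm_toEuclideanLin_sq [DecidableEq n] (M : Matrix m n ℝ) (u : EuclideanSpace ℝ n) :
    ‖toEuclideanLin M u‖ ^ 2 = ∑ i, (M *ᵥ u) i ^ 2 :=
  EuclideanSpace.real_norm_sq_eq _

lemma sum_sq_mulVec {R : Type*} [CommSemiring R] (S : Matrix m n R) (v : n → R) :
    ∑ i, (S *ᵥ v) i ^ 2 = v ⬝ᵥ ((Sᵀ * S) *ᵥ v) := by
  rw [← mulVec_mulVec, dotProduct_transpose_mulVec, dotProduct_comm]
  simp only [dotProduct, sq]

lemma dotProduct_mul_diagonal_mul_transpose_mulVec [DecidableEq n] (W : Matrix m n ℝ) (d : n → ℝ)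
    (v : m → ℝ) : v ⬝ᵥ ((W * diagonal d * Wᵀ) *ᵥ v) = ∑ c, d c * (Wᵀ *ᵥ v) c ^ 2 := by
  rw [← mulVec_mulVec, ← mulVec_mulVec, dotProduct_mulVec, ← mulVec_transpose]
  simp only [dotProduct, mulVec_diagonal, sq, mul_left_comm]

end Matrix

lemma Fin.sum_sum_castLE_finProdFinEquiv_le {M : Type*} [AddCommMonoid M] [PartialOrder M]
    [IsOrderedAddMonoid M] {j k n : ℕ} (hjk : j * k ≤ n) {f : Fin n → M} (hf : 0 ≤ f) :
    ∑ i : Fin j, ∑ s : Fin k, f (Fin.castLE hjk (finProdFinEquiv (i, s))) ≤ ∑ c, f c := by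
  rw [← Fintype.sum_prod_type', finProdFinEquiv.sum_comp (fun q => f (Fin.castLE hjk q))]
  exact (Finset.sum_map _ (Fin.castLEEmb hjk) f).symm.trans_le (Finset.sum_le_univ_sum_of_nonneg hf)

lemma sigmaMin_nonneg {n : ℕ} (M : Matrix (Fin n) (Fin n) ℝ) : 0 ≤ sigmaMin M :=
  Real.iInf_nonneg fun _ => norm_nonneg _

lemma sigmaMin_le_norm {n : ℕ} (M : Matrix (Fin n) (Fin n) ℝ) {x : EuclideanSpace ℝ (Fin n)}
    (hx : x ∈ Metric.sphere 0 1) : sigmaMin M ≤ ‖toEuclideanLin M x‖ :=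
  ciInf_le ⟨0, by rintro _ ⟨y, rfl⟩; exact norm_nonneg _⟩ (⟨x, hx⟩ : Metric.sphere _ _)

lemma le_sigmaLast {k n : ℕ} (hk : 0 < k) (M : Matrix (Fin k) (Fin n) ℝ) {c : ℝ}
    (h : ∀ u ∈ Metric.sphere (0 : EuclideanSpace ℝ (Fin k)) 1, c ≤ ‖toEuclideanLin Mᵀ u‖) :
    c ≤ sigmaLast M :=
  have : Nonempty (Metric.sphere (0 : EuclideanSpace ℝ (Fin k)) 1) :=
    ⟨⟨EuclideanSpace.single ⟨0, hk⟩ 1, by simp⟩⟩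
  le_ciInf fun u => h u u.2

namespace Matrix.PosSemidef

variable {n : ℕ} {A : Matrix (Fin n) (Fin n) ℝ}

lemma sqrt_transpose (hA : A.PosSemidef) : hA.sqrtᵀ = hA.sqrt := by
  simp only [Matrix.PosSemidef.sqrt, transpose_mul, diagonal_transpose, star_eq_conjTranspose,
    conjTranspose_eq_transpose_of_trivial, transpose_transpose, Matrix.mul_assoc]

lemma sqrt_mul_self (hA : A.PosSemidef) : hA.sqrt * hA.sqrt = A := by
  have hD : diagonal (((↑) ∘ (√·) ∘ hA.1.eigenvalues : Fin n → ℝ)) *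
      diagonal ((↑) ∘ (√·) ∘ hA.1.eigenvalues) = diagonal (RCLike.ofReal ∘ hA.1.eigenvalues) := by
    rw [diagonal_mul_diagonal]
    congr 1
    funext i
    exact Real.mul_self_sqrt (hA.eigenvalues_nonneg i)
  conv_rhs => rw [hA.1.spectral_theorem, Unitary.conjStarAlgAut_apply, ← hD]
  simp only [Matrix.PosSemidef.sqrt, Matrix.mul_assoc, ← Matrix.mul_assoc (star _) _,
    Unitary.coe_star_mul_self, Matrix.one_mul]

end Matrix.PosSemidef

lemma sq_sigmaMin_transpose_submatrix_mul_le {m ι : Type*} [Fintype m] {k : ℕ}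
    (W : Matrix m ι ℝ) (e : Fin k → ι) (X : Matrix m (Fin k) ℝ) {u : EuclideanSpace ℝ (Fin k)}
    (hu : u ∈ Metric.sphere 0 1) :
    sigmaMin ((W.submatrix id e)ᵀ * X) ^ 2 ≤ ∑ s, (Wᵀ *ᵥ (X *ᵥ u)) (e s) ^ 2 := by
  have := pow_le_pow_left₀ (sigmaMin_nonneg _) (sigmaMin_le_norm ((W.submatrix id e)ᵀ * X) hu) 2
  rwa [norm_toEuclideanLin_sq, ← mulVec_mulVec] at this

lemma norm_toEuclideanLin_transpose_mul_sqrt_sq {n : ℕ} {m : Type*} [Fintype m] [DecidableEq m]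
    {A W : Matrix (Fin n) (Fin n) ℝ} (hA : A.PosSemidef) {lam : Fin n → ℝ}
    (hAeig : A = W * diagonal lam * Wᵀ) (X : Matrix (Fin n) m ℝ) (u : EuclideanSpace ℝ m) :
    ‖toEuclideanLin (Xᵀ * hA.sqrt)ᵀ u‖ ^ 2 = ∑ c, lam c * (Wᵀ *ᵥ (X *ᵥ u)) c ^ 2 := by
  rw [norm_toEuclideanLin_sq, transpose_mul, transpose_transpose, hA.sqrt_transpose,
    ← mulVec_mulVec, sum_sq_mulVec, hA.sqrt_transpose, hA.sqrt_mul_self, hAeig,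
    dotProduct_mul_diagonal_mul_transpose_mulVec]

/-- Let `A = W Λ Wᵀ` with `W` orthogonal and `Λ = diag(λ_1,…,λ_n)`,
`λ_1 ≥ … ≥ λ_n ≥ 0`. For `1 ≤ i ≤ j` (with `jk ≤ n`), let `W_i ∈ ℝ^{n×k}` consist of
columns `(i−1)k+1, …, ik` of `W`. Then for every `X ∈ ℝ^{n×k}`,
`σ_min(XᵀA^{1/2}) ≥ (Σ_{i=1}^{j} λ_{ik} σ_min(W_iᵀX)²)^{1/2}`. -/
theorem stmt3 {n k j : ℕ} (hk : 1 ≤ k) (hjk : j * k ≤ n)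
    (A : Matrix (Fin n) (Fin n) ℝ) (hA : A.PosSemidef)
    (lam : Fin n → ℝ) (hlam : Antitone lam) (hlam0 : ∀ i, 0 ≤ lam i)
    (W : Matrix (Fin n) (Fin n) ℝ)
    (hAeig : A = W * Matrix.diagonal lam * Wᵀ)
    (Wsub : Fin j → Matrix (Fin n) (Fin k) ℝ)
    (hWsub : ∀ (i : Fin j) (t : Fin n) (s : Fin k) (h : i.val * k + s.val < n),
      Wsub i t s = W t ⟨i.val * k + s.val, h⟩)
    (X : Matrix (Fin n) (Fin k) ℝ) :
    Real.sqrt (∑ i : Fin j,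
        lam ⟨i.val * k + (k - 1), by
            have h0 : i.val + 1 ≤ j := i.isLt
            have h1 : (i.val + 1) * k ≤ j * k := Nat.mul_le_mul_right k h0
            have h2 : (i.val + 1) * k = i.val * k + k := by ring
            omega⟩ *
          (sigmaMin ((Wsub i)ᵀ * X)) ^ 2) ≤
      sigmaLast (Xᵀ * hA.sqrt) := by
  let e : Fin j → Fin k → Fin n := fun i s => Fin.castLE hjk (finProdFinEquiv (i, s))
  have he : ∀ i s, (e i s : ℕ) = i * k + s := fun i s => by
    simp only [e, Fin.val_castLE, finProdFinEquiv_apply_val]; ring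
  have hWsub_eq : ∀ i, Wsub i = W.submatrix id (e i) := fun i => by
    ext t s
    exact (hWsub i t s (he i s ▸ (e i s).isLt)).trans (congrArg (W t) (Fin.ext (he i s).symm))
  refine le_sigmaLast hk _ fun u hu => ?_
  let w := Wᵀ *ᵥ (X *ᵥ u)
  rw [Real.sqrt_le_left (norm_nonneg _), norm_toEuclideanLin_transpose_mul_sqrt_sq hA hAeig]
  calc _ ≤ ∑ i : Fin j, ∑ s, lam (e i s) * w (e i s) ^ 2 := by
        refine Finset.sum_le_sum fun i _ => ?_
        calc _ ≤ _ * ∑ s, w (e i s) ^ 2 := mul_le_mul_of_nonneg_left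
                (hWsub_eq i ▸ sq_sigmaMin_transpose_submatrix_mul_le W (e i) X hu) (hlam0 _)
          _ = ∑ s, _ * w (e i s) ^ 2 := Finset.mul_sum _ _ _
          _ ≤ _ := Finset.sum_le_sum fun s _ => by
            have hs := s.isLt
            exact mul_le_mul_of_nonneg_right
              (hlam ((he i s).trans_le (by omega : (i : ℕ) * k + s ≤ i * k + (k - 1))))
              (sq_nonneg _)
    _ ≤ ∑ c, lam c * w c ^ 2 :=
        Fin.sum_sum_castLE_finProdFinEquiv_le (f := fun c => lam c * w c ^ 2) hjk
          fun c => mul_nonneg (hlam0 c) (sq_nonneg _)
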